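/- arXiv:0803.2281 — 5 statements merged into one kernel-verified Lean document; each statement's English description precedes it below -/
import Mathlib

section
/- Let n ≥ 1 and r, s ≥ 0 be integers. For each fixed i with 1 ≤ i ≤ n, the inner quadrature weight λ_i of the generalized Gauss–Radau/Gauss–Lobatto formula is strictly positive: λ_i > 0. -/
open MeasureTheory

/-- The generalized Gauss–Radau/Gauss–Lobatto quadrature
`Q_{n,r,s}(f) = Σ_{j<r} λ₀^{(j)} f^{(j)}(a) + Σ_{j<n} λ_j f(τ_j) + Σ_{j<s} (-1)^j λ_{n+1}^{(j)} f^{(j)}(b)`,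
where derivatives are taken within `[a,b]`. -/
noncomputable def quad (a b : ℝ) (n r s : ℕ) (τ w0 wi w1 : ℕ → ℝ) (f : ℝ → ℝ) : ℝ :=
  (∑ j ∈ Finset.range r, w0 j * iteratedDerivWithin j f (Set.Icc a b) a)
  + (∑ j ∈ Finset.range n, wi j * f (τ j))
  + (∑ j ∈ Finset.range s, (-1 : ℝ) ^ j * w1 j * iteratedDerivWithin j f (Set.Icc a b) b)

/-!
Fix `i < n` and test the exactness of the quadrature on
`q = (X - a)^r (b - X)^s ∏_{j ≠ i} (X - τ_j)^2`, of degree `2n + r + s - 2`.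
Its roots of order `r` at `a` and `s` at `b` kill the boundary terms, and it vanishes at every
other node, so the quadrature returns `λ_i q(τ_i)` with `q(τ_i) > 0`. On the other hand `q ≥ 0`
on `[a,b]` and `q` is positive at some point of the support of `μ` (the support is infinite,
`q` has finitely many roots), so `∫ q dμ > 0`.
-/

open Polynomial Finset

namespace Polynomial

variable {𝕜 : Type*} [NontriviallyNormedField 𝕜] {s : Set 𝕜}

protected theorem iteratedDerivWithin (p : 𝕜[X]) (hs : UniqueDiffOn 𝕜 s) {x : 𝕜} (hx : x ∈ s)
    (j : ℕ) : iteratedDerivWithin j (fun t => p.eval t) s x = (derivative^[j] p).eval x := by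
  induction j generalizing p x with
  | zero => simp
  | succ j ih =>
    have hderiv : Set.EqOn (derivWithin (fun t => p.eval t) s) (fun t => p.derivative.eval t) s :=
      fun y hy => p.derivWithin (hs.uniqueDiffWithinAt hy)
    rw [iteratedDerivWithin_succ', Function.iterate_succ_apply,
      iteratedDerivWithin_congr hderiv hx, ih _ hx]

theorem iteratedDerivWithin_eq_zero_of_lt_rootMultiplicity [CharZero 𝕜] {p : 𝕜[X]}
    (hs : UniqueDiffOn 𝕜 s) {x : 𝕜} (hx : x ∈ s) {j : ℕ} (hj : j < p.rootMultiplicity x) :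
    iteratedDerivWithin j (fun t => p.eval t) s x = 0 := by
  rw [p.iteratedDerivWithin hs hx]
  exact isRoot_iterate_derivative_of_lt_rootMultiplicity hj

end Polynomial

theorem quad_eq_of_le_rootMultiplicity {a b : ℝ} (hab : a < b) (n r s : ℕ)
    (τ w0 wi w1 : ℕ → ℝ) {p : ℝ[X]} (ha : r ≤ p.rootMultiplicity a)
    (hb : s ≤ p.rootMultiplicity b) :
    quad a b n r s τ w0 wi w1 (fun t => p.eval t) = ∑ j ∈ range n, wi j * p.eval (τ j) := by
  have hud : UniqueDiffOn ℝ (Set.Icc a b) := uniqueDiffOn_Icc hab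
  have hleft : ∀ j ∈ range r,
      w0 j * iteratedDerivWithin j (fun t => p.eval t) (Set.Icc a b) a = 0 := fun j hj => by
    rw [iteratedDerivWithin_eq_zero_of_lt_rootMultiplicity hud (Set.left_mem_Icc.mpr hab.le)
      ((mem_range.mp hj).trans_le ha), mul_zero]
  have hright : ∀ j ∈ range s,
      (-1 : ℝ) ^ j * w1 j * iteratedDerivWithin j (fun t => p.eval t) (Set.Icc a b) b = 0 :=
    fun j hj => by
      rw [iteratedDerivWithin_eq_zero_of_lt_rootMultiplicity hud (Set.right_mem_Icc.mpr hab.le)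
        ((mem_range.mp hj).trans_le hb), mul_zero]
  rw [quad, sum_eq_zero hleft, sum_eq_zero hright, zero_add, add_zero]

theorem integral_pos_of_pos_of_forall_measure_Ioo_pos {μ : Measure ℝ} {f : ℝ → ℝ}
    (hf : Continuous f) (hfi : Integrable f μ) (hnn : 0 ≤ᵐ[μ] f) {x : ℝ} (hx : 0 < f x)
    (hμx : ∀ ε > 0, 0 < μ (Set.Ioo (x - ε) (x + ε))) : 0 < ∫ t, f t ∂μ := by
  obtain ⟨ε, hε, hball⟩ :=
    Metric.isOpen_iff.mp (isOpen_lt continuous_const hf) x hx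
  have hsub : Set.Ioo (x - ε) (x + ε) ⊆ Function.support f := fun t ht =>
    (hball (by rwa [Real.ball_eq_Ioo])).ne'
  exact (integral_pos_iff_support_of_nonneg_ae hnn hfi).mpr
    ((hμx ε hε).trans_le (measure_mono hsub))

theorem Continuous.integrable_of_ae_mem_Icc {μ : Measure ℝ} [IsFiniteMeasure μ] {f : ℝ → ℝ}
    (hf : Continuous f) {a b : ℝ} (hμ : ∀ᵐ t ∂μ, t ∈ Set.Icc a b) : Integrable f μ := by
  rw [← Measure.restrict_eq_self_of_ae_mem hμ]
  exact hf.continuousOn.integrableOn_compact isCompact_Icc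

noncomputable def nodePoly (a b : ℝ) (r s : ℕ) (τ : ℕ → ℝ) (S : Finset ℕ) : ℝ[X] :=
  (X - C a) ^ r * (C b - X) ^ s * ∏ j ∈ S, (X - C (τ j)) ^ 2

section nodePoly

variable {a b : ℝ} {r s : ℕ} {τ : ℕ → ℝ} {S : Finset ℕ}

theorem eval_nodePoly (t : ℝ) :
    (nodePoly a b r s τ S).eval t = (t - a) ^ r * (b - t) ^ s * ∏ j ∈ S, (t - τ j) ^ 2 := by
  simp [nodePoly, eval_prod]

theorem nodePoly_ne_zero : nodePoly a b r s τ S ≠ 0 := by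
  have hb : (C b - X : ℝ[X]) ≠ 0 := by
    rw [← neg_sub]
    exact neg_ne_zero.mpr (X_sub_C_ne_zero b)
  exact mul_ne_zero (mul_ne_zero (pow_ne_zero _ (X_sub_C_ne_zero a)) (pow_ne_zero _ hb))
    (prod_ne_zero_iff.mpr fun j _ => pow_ne_zero _ (X_sub_C_ne_zero _))

theorem natDegree_nodePoly_le : (nodePoly a b r s τ S).natDegree ≤ r + s + 2 * #S := by
  have hleft : ((X - C a) ^ r).natDegree ≤ r := by simp
  have hright : ((C b - X) ^ s).natDegree ≤ s := by
    rw [← neg_sub, natDegree_pow, natDegree_neg, natDegree_X_sub_C, mul_one]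
  have hnodes : (∏ j ∈ S, (X - C (τ j)) ^ 2).natDegree ≤ 2 * #S := by
    rw [natDegree_prod _ _ fun j _ => pow_ne_zero _ (X_sub_C_ne_zero _)]
    simp [mul_comm]
  exact natDegree_mul_le.trans
    (add_le_add (natDegree_mul_le.trans (add_le_add hleft hright)) hnodes)

theorem le_rootMultiplicity_nodePoly_left : r ≤ (nodePoly a b r s τ S).rootMultiplicity a := by
  rw [le_rootMultiplicity_iff nodePoly_ne_zero]
  exact ⟨(C b - X) ^ s * ∏ j ∈ S, (X - C (τ j)) ^ 2, by rw [nodePoly]; ring⟩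

theorem le_rootMultiplicity_nodePoly_right : s ≤ (nodePoly a b r s τ S).rootMultiplicity b := by
  rw [le_rootMultiplicity_iff nodePoly_ne_zero]
  exact ⟨(-1) ^ s * (X - C a) ^ r * ∏ j ∈ S, (X - C (τ j)) ^ 2, by
    rw [nodePoly, show C b - X = -(X - C b) by ring, neg_pow]; ring⟩

theorem eval_nodePoly_nonneg {t : ℝ} (ht : t ∈ Set.Icc a b) :
    0 ≤ (nodePoly a b r s τ S).eval t := by
  rw [eval_nodePoly]
  exact mul_nonneg (mul_nonneg (pow_nonneg (sub_nonneg.mpr ht.1) r)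
    (pow_nonneg (sub_nonneg.mpr ht.2) s)) (prod_nonneg fun j _ => sq_nonneg _)

theorem eval_nodePoly_node {j : ℕ} (hj : j ∈ S) : (nodePoly a b r s τ S).eval (τ j) = 0 := by
  rw [eval_nodePoly, prod_eq_zero hj (by ring), mul_zero]

theorem eval_nodePoly_pos {t : ℝ} (ht : t ∈ Set.Ioo a b) (hτ : ∀ j ∈ S, τ j ≠ t) :
    0 < (nodePoly a b r s τ S).eval t := by
  rw [eval_nodePoly]
  exact mul_pos (mul_pos (pow_pos (sub_pos.mpr ht.1) r) (pow_pos (sub_pos.mpr ht.2) s))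
    (prod_pos fun j hj => pow_two_pos_of_ne_zero (sub_ne_zero.mpr (hτ j hj).symm))

end nodePoly

theorem inner_weights_pos_general
    (a b : ℝ) (hab : a < b)
    (μ : Measure ℝ) [IsFiniteMeasure μ]
    (hsupp : μ (Set.Icc a b)ᶜ = 0)
    (hinf : {x | x ∈ Set.Ioo a b ∧ ∀ ε > 0, 0 < μ (Set.Ioo (x - ε) (x + ε))}.Infinite)
    (n r s : ℕ)
    (τ w0 wi w1 : ℕ → ℝ)
    (hτab : ∀ j < n, τ j ∈ Set.Ioo a b)
    (hτmono : ∀ i j, i < j → j < n → τ i < τ j)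
    (hex : ∀ p : Polynomial ℝ, p.natDegree + 1 ≤ 2 * n + r + s →
      quad a b n r s τ w0 wi w1 (fun t => p.eval t) = ∫ t, p.eval t ∂μ)
    (i : ℕ) (hi : i < n) :
    0 < wi i := by
  set S := (range n).erase i
  set q := nodePoly a b r s τ S
  have hS : #S + 1 = n := card_erase_add_one (mem_range.mpr hi) |>.trans (card_range n)
  have hdeg : q.natDegree + 1 ≤ 2 * n + r + s := by
    have : q.natDegree ≤ r + s + 2 * #S := natDegree_nodePoly_le
    omega
  have hτi : 0 < q.eval (τ i) := by
    refine eval_nodePoly_pos (hτab i hi) fun j hj => ?_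
    obtain ⟨hji, hjn⟩ := mem_erase.mp hj
    rcases hji.lt_or_gt with h | h
    · exact (hτmono j i h hi).ne
    · exact (hτmono i j h (mem_range.mp hjn)).ne'
  have hquad : quad a b n r s τ w0 wi w1 (fun t => q.eval t) = wi i * q.eval (τ i) := by
    rw [quad_eq_of_le_rootMultiplicity hab n r s τ w0 wi w1
      le_rootMultiplicity_nodePoly_left le_rootMultiplicity_nodePoly_right]
    refine sum_eq_single_of_mem i (mem_range.mpr hi) fun j hj hji => ?_
    rw [eval_nodePoly_node (mem_erase.mpr ⟨hji, hj⟩), mul_zero]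
  have hIcc : ∀ᵐ t ∂μ, t ∈ Set.Icc a b := ae_iff.mpr hsupp
  obtain ⟨x, ⟨hxab, hμx⟩, hxroot⟩ :=
    (hinf.sdiff (finite_setOfPred_isRoot nodePoly_ne_zero)).nonempty
  have hqx : 0 < q.eval x :=
    (eval_nodePoly_nonneg (Set.mem_Icc_of_Ioo hxab)).lt_of_ne' hxroot
  have hint : 0 < ∫ t, q.eval t ∂μ :=
    integral_pos_of_pos_of_forall_measure_Ioo_pos q.continuous
      (q.continuous.integrable_of_ae_mem_Icc hIcc)
      (hIcc.mono fun t ht => eval_nodePoly_nonneg ht) hqx hμx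
  rw [← hex q hdeg, hquad] at hint
  exact pos_of_mul_pos_left hint hτi.le

/-- the inner weights of a generalized Gauss–Radau/Gauss–Lobatto
formula are strictly positive. -/
theorem inner_weights_pos
    (a b : ℝ) (hab : a < b)
    (μ : Measure ℝ) [IsFiniteMeasure μ]
    (hsupp : μ (Set.Icc a b)ᶜ = 0)
    (hinf : {x | x ∈ Set.Ioo a b ∧ ∀ ε > 0, 0 < μ (Set.Ioo (x - ε) (x + ε))}.Infinite)
    (n r s : ℕ) (hn : 1 ≤ n)
    (τ w0 wi w1 : ℕ → ℝ)
    (hτab : ∀ j < n, τ j ∈ Set.Ioo a b)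
    (hτmono : ∀ i j, i < j → j < n → τ i < τ j)
    (hex : ∀ p : Polynomial ℝ, p.natDegree + 1 ≤ 2 * n + r + s →
      quad a b n r s τ w0 wi w1 (fun t => p.eval t) = ∫ t, p.eval t ∂μ)
    (i : ℕ) (hi : i < n) :
    0 < wi i :=
  inner_weights_pos_general a b hab μ hsupp hinf n r s τ w0 wi w1 hτab hτmono hex i hi
end

section
/- Let n, s ≥ 0 and r ≥ 1 be integers. For each j with 0 ≤ j ≤ r−1, the boundary quadrature weight λ_0^{(j)} attached to the j-th derivative at the left endpoint a is strictly positive: λ_0^{(j)} > 0. -/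
/-!
Put `m = r - 1 - j` and `H(t) = (b - t)^s ∏ᵢ (τᵢ - t)^2`. Every factor `e - t` of `H` has `e > a`,
so the Taylor expansion of `1/H` at `a` has nonnegative coefficients, and its truncation `q` of
degree `m` is nonnegative on `[a, ∞)`. The test polynomial `p = (t - a)^j H q` has degree
`2n + r + s - 1`, vanishes at the nodes and to order `s` at `b`, and agrees with `(t - a)^j` to
order `r` at `a`; exactness therefore gives `j! λ₀^{(j)} = Q(p) = ∫ p dμ`. Finally `p ≥ 0` on
`[a, b]` and `p ≠ 0`, so the integral is positive: `μ` charges every neighbourhood of infinitely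
many points, and one of them is not a root of `p`.
-/

open MeasureTheory

open Polynomial Finset Set
open scoped PowerSeries Nat

namespace PowerSeries

theorem coeff_mul_nonneg {R : Type*} [CommSemiring R] [PartialOrder R] [IsOrderedRing R]
    {F G : R⟦X⟧} (hF : ∀ k, 0 ≤ coeff k F) (hG : ∀ k, 0 ≤ coeff k G)
    (k : ℕ) : 0 ≤ coeff k (F * G) := by
  rw [coeff_mul]
  exact sum_nonneg fun x _ => mul_nonneg (hF _) (hG _)

end PowerSeries

namespace Polynomial

theorem eval_nonneg_of_coeff_nonneg {R : Type*} [CommSemiring R] [PartialOrder R]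
    [IsOrderedRing R] {q : R[X]} (hq : ∀ k, 0 ≤ q.coeff k) {t : R} (ht : 0 ≤ t) :
    0 ≤ q.eval t := by
  rw [eval_eq_sum_range]
  exact sum_nonneg fun i _ => mul_nonneg (hq i) (pow_nonneg ht i)

section OrderedField

variable {K : Type*} [Field K] [LinearOrder K] [IsStrictOrderedRing K]

variable (K) in
def nonnegRecipSubmonoid : Submonoid K[X] where
  carrier := {H | ∃ F : K⟦X⟧, (∀ k, 0 ≤ PowerSeries.coeff k F) ∧ (H : K⟦X⟧) * F = 1}
  mul_mem' := by
    rintro H₁ H₂ ⟨F₁, hF₁, h₁⟩ ⟨F₂, hF₂, h₂⟩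
    refine ⟨F₁ * F₂, PowerSeries.coeff_mul_nonneg hF₁ hF₂, ?_⟩
    rw [coe_mul, mul_mul_mul_comm, h₁, h₂, one_mul]
  one_mem' := ⟨1, fun k => by rw [PowerSeries.coeff_one]; split_ifs <;> norm_num, by simp⟩

theorem mem_nonnegRecipSubmonoid {H : K[X]} : H ∈ nonnegRecipSubmonoid K ↔
    ∃ F : K⟦X⟧, (∀ k, 0 ≤ PowerSeries.coeff k F) ∧ (H : K⟦X⟧) * F = 1 :=
  Iff.rfl

theorem C_sub_X_mem_nonnegRecipSubmonoid {e : K} (he : 0 < e) :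
    C e - X ∈ nonnegRecipSubmonoid K := by
  refine mem_nonnegRecipSubmonoid.2
    ⟨PowerSeries.invUnitsSub (Units.mk0 e he.ne'), fun k => ?_, ?_⟩
  · rw [PowerSeries.coeff_invUnitsSub]
    simp only [one_divp, Units.val_inv_eq_inv_val, Units.val_pow_eq_pow_val, Units.val_mk0]
    positivity
  · rw [mul_comm, coe_sub, coe_C, coe_X]
    exact PowerSeries.invUnitsSub_mul_sub _

theorem exists_natDegree_le_coeff_nonneg_X_pow_dvd {H : K[X]} (hH : H ∈ nonnegRecipSubmonoid K)
    (m : ℕ) : ∃ q : K[X], q.natDegree ≤ m ∧ (∀ k, 0 ≤ q.coeff k) ∧ X ^ (m + 1) ∣ H * q - 1 := by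
  obtain ⟨F, hF, hHF⟩ := mem_nonnegRecipSubmonoid.1 hH
  refine ⟨PowerSeries.trunc (m + 1) F, Nat.lt_succ_iff.1 (PowerSeries.natDegree_trunc_lt F m),
    fun k => ?_, X_pow_dvd_iff.2 fun d hd => ?_⟩
  · rw [PowerSeries.coeff_trunc]
    split_ifs
    exacts [hF k, le_rfl]
  · have htrunc :
        PowerSeries.trunc (m + 1) ((H * PowerSeries.trunc (m + 1) F : K[X]) : K⟦X⟧) = 1 := by
      rw [coe_mul, PowerSeries.trunc_mul_trunc, hHF, PowerSeries.trunc_one]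
    have := congrArg (coeff · d) htrunc
    simp only [PowerSeries.coeff_trunc, if_pos hd, coeff_coe] at this
    rw [coeff_sub, this, sub_self]

theorem exists_natDegree_le_nonneg_X_sub_C_pow_dvd {a : K} {H : K[X]}
    (hH : taylor a H ∈ nonnegRecipSubmonoid K) (m : ℕ) :
    ∃ q : K[X], q.natDegree ≤ m ∧ (∀ t, a ≤ t → 0 ≤ q.eval t) ∧
      (X - C a) ^ (m + 1) ∣ H * q - 1 := by
  obtain ⟨q, hdeg, hcoeff, hdvd⟩ := exists_natDegree_le_coeff_nonneg_X_pow_dvd hH m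
  refine ⟨taylor (-a) q, by rwa [natDegree_taylor], fun t ht => ?_, ?_⟩
  · rw [taylor_eval]
    exact eval_nonneg_of_coeff_nonneg hcoeff (by linarith)
  · have := _root_.map_dvd (taylorAlgHom (-a)) hdvd
    simpa only [taylorAlgHom_apply, map_sub, map_mul, map_pow, map_one, taylor_taylor,
      neg_add_cancel, taylor_zero, taylor_X, C_neg, ← sub_eq_add_neg] using this

theorem taylor_C_sub_X_mem_nonnegRecipSubmonoid {a e : K} (hae : a < e) :
    taylor a (C e - X) ∈ nonnegRecipSubmonoid K := by
  have h : taylor a (C e - X) = C (e - a) - X := by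
    rw [map_sub, taylor_C, taylor_X, C_sub]; ring
  exact h ▸ C_sub_X_mem_nonnegRecipSubmonoid (sub_pos.2 hae)

end OrderedField

theorem eval_iterate_derivative_eq_zero_of_pow_dvd {R : Type*} [CommRing R] {p : R[X]} {x : R}
    {s k : ℕ} (h : (X - C x) ^ s ∣ p) (hk : k < s) : (derivative^[k] p).eval x = 0 := by
  have := (dvd_pow_self (X - C x) (Nat.sub_ne_zero_of_lt hk)).trans
    (pow_sub_dvd_iterate_derivative_of_pow_dvd k h)
  exact dvd_iff_isRoot.1 this

theorem eval_iterate_derivative_of_pow_dvd_sub_pow {R : Type*} [CommRing R] {p : R[X]} {x : R}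
    {r j k : ℕ} (h : (X - C x) ^ r ∣ p - (X - C x) ^ j) (hk : k < r) :
    (derivative^[k] p).eval x = if k = j then (j ! : R) else 0 := by
  have := eval_iterate_derivative_eq_zero_of_pow_dvd h hk
  rw [iterate_derivative_sub, eval_sub, sub_eq_zero, iterate_derivative_X_sub_pow] at this
  rw [this, eval_smul, eval_pow, eval_sub, eval_X, eval_C, sub_self, nsmul_eq_mul]
  split_ifs with hkj
  · simp [hkj, Nat.descFactorial_self]
  · rcases lt_or_gt_of_ne hkj with hlt | hgt
    · simp [zero_pow (Nat.sub_ne_zero_of_lt hlt)]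
    · simp [Nat.descFactorial_of_lt hgt]

theorem iteratedDeriv_eval {𝕜 : Type*} [NontriviallyNormedField 𝕜] (p : 𝕜[X]) (k : ℕ) :
    iteratedDeriv k (fun x => p.eval x) = fun x => (derivative^[k] p).eval x := by
  induction k generalizing p with
  | zero => simp
  | succ k ih =>
    have hderiv : _root_.deriv (fun x => p.eval x) = fun x => p.derivative.eval x := by
      ext x
      exact p.deriv
    rw [iteratedDeriv_succ', hderiv, ih, Function.iterate_succ_apply]

theorem iteratedDerivWithin_Icc_eval {a b : ℝ} (hab : a < b) (p : ℝ[X]) (k : ℕ) {x : ℝ}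
    (hx : x ∈ Icc a b) :
    iteratedDerivWithin k (fun t => p.eval t) (Icc a b) x = (derivative^[k] p).eval x := by
  have hp : ContDiff ℝ k (fun t => p.eval t) := by simpa using p.contDiff_aeval (𝕜 := ℝ) k
  rw [iteratedDerivWithin_eq_iteratedDeriv (uniqueDiffOn_Icc hab) hp.contDiffAt hx,
    iteratedDeriv_eval]

end Polynomial

theorem exists_nonneg_polynomial_isolating_left_derivative {a b : ℝ} (hab : a < b)
    {n r s j : ℕ} (hj : j < r) {τ : ℕ → ℝ} (hτ : ∀ i < n, a < τ i) :
    ∃ p : ℝ[X], p.natDegree + 1 ≤ 2 * n + r + s ∧ (X - C a) ^ r ∣ p - (X - C a) ^ j ∧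
      (X - C b) ^ s ∣ p ∧ (∀ i < n, p.eval (τ i) = 0) ∧ ∀ t ∈ Icc a b, 0 ≤ p.eval t := by
  set H : ℝ[X] := (C b - X) ^ s * ∏ i ∈ range n, (C (τ i) - X) ^ 2 with hH
  let S := (nonnegRecipSubmonoid ℝ).comap (taylorAlgHom a : ℝ[X] →* ℝ[X])
  have hfactor : ∀ e, a < e → C e - X ∈ S := fun _ => taylor_C_sub_X_mem_nonnegRecipSubmonoid
  have hHmem : H ∈ S :=
    mul_mem (pow_mem (hfactor b hab) s)
      (prod_mem fun i hi => pow_mem (hfactor _ (hτ i (mem_range.1 hi))) 2)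
  obtain ⟨q, hqdeg, hqnonneg, hqdvd⟩ :=
    exists_natDegree_le_nonneg_X_sub_C_pow_dvd hHmem (r - 1 - j)
  refine ⟨(X - C a) ^ j * H * q, ?_, ?_, ?_, fun i hi => ?_, fun t ht => ?_⟩
  · have hlin : ∀ e : ℝ, (C e - X).natDegree ≤ 1 := fun e => by compute_degree
    have hHdeg : H.natDegree ≤ s * 1 + ∑ i ∈ range n, 2 * 1 :=
      natDegree_mul_le_of_le (natDegree_pow_le_of_le s (hlin b))
        ((natDegree_prod_le _ _).trans (sum_le_sum fun i _ => natDegree_pow_le_of_le 2 (hlin _)))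
    have hpdeg := natDegree_mul_le_of_le (natDegree_mul_le_of_le
      (natDegree_pow_le_of_le j (natDegree_X_sub_C_le a)) hHdeg) hqdeg
    simp only [sum_const, card_range, smul_eq_mul] at hpdeg
    omega
  · have hr : r = j + (r - 1 - j + 1) := by omega
    rw [hr, pow_add, mul_assoc, ← mul_sub_one]
    exact mul_dvd_mul_left _ hqdvd
  · have : X - C b ∣ C b - X := ⟨-1, by ring⟩
    exact ((pow_dvd_pow_of_dvd this s).mul_right _).mul_left _ |>.mul_right _
  · have hzero : (∏ k ∈ range n, (C (τ k) - X) ^ 2).eval (τ i) = 0 := by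
      rw [eval_prod]
      exact prod_eq_zero (mem_range.2 hi) (by simp)
    simp [hH, hzero]
  · simp only [hH, eval_mul, eval_pow, eval_sub, eval_X, eval_C, eval_prod]
    exact mul_nonneg (mul_nonneg (pow_nonneg (sub_nonneg.2 ht.1) j)
      (mul_nonneg (pow_nonneg (sub_nonneg.2 ht.2) s) (prod_nonneg fun i _ => sq_nonneg _)))
      (hqnonneg t ht.1)

theorem quad_eq_mul_factorial_of_dvd {a b : ℝ} (hab : a < b) {n r s j : ℕ} (hj : j < r)
    (τ w0 wi w1 : ℕ → ℝ) {p : ℝ[X]} (ha : (X - C a) ^ r ∣ p - (X - C a) ^ j)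
    (hb : (X - C b) ^ s ∣ p) (hτ : ∀ i < n, p.eval (τ i) = 0) :
    quad a b n r s τ w0 wi w1 (fun t => p.eval t) = w0 j * j ! := by
  have hleft : ∀ k ∈ range r,
      w0 k * iteratedDerivWithin k (fun t => p.eval t) (Icc a b) a =
        if k = j then w0 j * j ! else 0 := by
    intro k hk
    rw [iteratedDerivWithin_Icc_eval hab p k (left_mem_Icc.2 hab.le),
      eval_iterate_derivative_of_pow_dvd_sub_pow ha (mem_range.1 hk)]
    split_ifs with hkj
    · rw [hkj]
    · rw [mul_zero]
  have hright : ∀ k ∈ range s,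
      (-1 : ℝ) ^ k * w1 k * iteratedDerivWithin k (fun t => p.eval t) (Icc a b) b = 0 := by
    intro k hk
    rw [iteratedDerivWithin_Icc_eval hab p k (right_mem_Icc.2 hab.le),
      eval_iterate_derivative_eq_zero_of_pow_dvd hb (mem_range.1 hk), mul_zero]
  rw [quad, sum_congr rfl hleft, sum_ite_eq' _ _, if_pos (mem_range.2 hj),
    sum_eq_zero fun i hi => by rw [hτ i (mem_range.1 hi), mul_zero], sum_eq_zero hright,
    add_zero, add_zero]

theorem integral_eval_pos_of_nonneg_on_Icc {a b : ℝ} {μ : Measure ℝ} [IsFiniteMeasure μ]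
    (hsupp : μ (Icc a b)ᶜ = 0)
    (hinf : {x | ∀ ε > 0, 0 < μ (Ioo (x - ε) (x + ε))}.Infinite)
    {p : ℝ[X]} (hp : p ≠ 0) (hnonneg : ∀ t ∈ Icc a b, 0 ≤ p.eval t) :
    0 < ∫ t, p.eval t ∂μ := by
  have hae : ∀ᵐ t ∂μ, t ∈ Icc a b := ae_iff.2 hsupp
  have hint : Integrable (fun t => p.eval t) μ := by
    rw [← Measure.restrict_eq_self_of_ae_mem hae]
    exact p.continuous.continuousOn.integrableOn_compact isCompact_Icc
  rw [integral_pos_iff_support_of_nonneg_ae (hae.mono hnonneg) hint]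
  obtain ⟨x, hxμ, hxroot⟩ := (hinf.sdiff p.roots.toFinset.finite_toSet).nonempty
  have hx : p.eval x ≠ 0 := fun h => hxroot (by simpa [hp] using h)
  obtain ⟨ε, hε, hball⟩ := Metric.isOpen_iff.1 p.continuous.isOpen_support x hx
  rw [Real.ball_eq_Ioo] at hball
  exact (hxμ ε hε).trans_le (measure_mono hball)

theorem left_boundary_weights_pos_general
    (a b : ℝ) (hab : a < b)
    (μ : Measure ℝ) [IsFiniteMeasure μ]
    (hsupp : μ (Set.Icc a b)ᶜ = 0)
    (hinf : {x | x ∈ Set.Ioo a b ∧ ∀ ε > 0, 0 < μ (Set.Ioo (x - ε) (x + ε))}.Infinite)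
    (n r s : ℕ) (hr : 1 ≤ r)
    (τ w0 wi w1 : ℕ → ℝ)
    (hτab : ∀ j < n, τ j ∈ Set.Ioo a b)
    (hex : ∀ p : Polynomial ℝ, p.natDegree + 1 ≤ 2 * n + r + s →
      quad a b n r s τ w0 wi w1 (fun t => p.eval t) = ∫ t, p.eval t ∂μ)
    (j : ℕ) (hj : j ≤ r - 1) :
    0 < w0 j := by
  have hjr : j < r := by omega
  obtain ⟨p, hdeg, ha, hb, hτ, hnonneg⟩ :=
    exists_nonneg_polynomial_isolating_left_derivative hab hjr fun i hi => (hτab i hi).1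
  have hp : p ≠ 0 := by
    rintro rfl
    have := eval_iterate_derivative_of_pow_dvd_sub_pow ha hjr
    simp only [iterate_map_zero, eval_zero, if_true] at this
    exact (Nat.cast_ne_zero.2 j.factorial_ne_zero) this.symm
  have hintegral :=
    integral_eval_pos_of_nonneg_on_Icc hsupp (hinf.mono fun x hx => hx.2) hp hnonneg
  rw [← hex p hdeg, quad_eq_mul_factorial_of_dvd hab hjr τ w0 wi w1 ha hb hτ] at hintegral
  exact pos_of_mul_pos_left hintegral (Nat.cast_nonneg _)

/-- the boundary weights `λ₀^{(j)}`, `0 ≤ j ≤ r-1`, attached to the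
derivatives at the left endpoint `a` are strictly positive. -/
theorem left_boundary_weights_pos
    (a b : ℝ) (hab : a < b)
    (μ : Measure ℝ) [IsFiniteMeasure μ]
    (hsupp : μ (Set.Icc a b)ᶜ = 0)
    (hinf : {x | x ∈ Set.Ioo a b ∧ ∀ ε > 0, 0 < μ (Set.Ioo (x - ε) (x + ε))}.Infinite)
    (n r s : ℕ) (hr : 1 ≤ r)
    (τ w0 wi w1 : ℕ → ℝ)
    (hτab : ∀ j < n, τ j ∈ Set.Ioo a b)
    (hτmono : ∀ i j, i < j → j < n → τ i < τ j)
    (hex : ∀ p : Polynomial ℝ, p.natDegree + 1 ≤ 2 * n + r + s →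
      quad a b n r s τ w0 wi w1 (fun t => p.eval t) = ∫ t, p.eval t ∂μ)
    (j : ℕ) (hj : j ≤ r - 1) :
    0 < w0 j :=
  left_boundary_weights_pos_general a b hab μ hsupp hinf n r s hr τ w0 wi w1 hτab hex j hj
end

section
/- Let n, s ≥ 0 be integers, a < b real numbers, and a < τ_1 < … < τ_n < b. Set ω(t) = (b−t)^s ∏_{k=1}^n (τ_k−t)^2, and for an integer m ≥ 0 let Ω_m(t) = Σ_{ℓ=0}^m (t−a)^ℓ (1/ω)^{(ℓ)}(a)/ℓ! denote the m-th partial sum of the Taylor expansion of 1/ω at t = a. Then Ω_m(t) > 0 for every t ∈ [a, b]. -/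
/-!
Each factor of `1/ω(u) = (b - u)^{-s} ∏ₖ (τₖ - u)^{-2}` is a power of some `(c - u)⁻¹` with
`c > a`, whose `k`-th derivative `k! (c - u)^{-k-1}` is positive at `u = a`. By the Leibniz
rule a product of functions with nonnegative derivatives of all orders at `a` again has this
property, so every Taylor coefficient of `1/ω` at `a` is nonnegative, and the constant one,
`1/ω(a)`, is positive. For `t ≥ a` every term of `Ω_m(t)` is therefore nonnegative and the
first one is positive.
-/

open Finset
open scoped ContDiff

structure HasNonnegIteratedDerivAt (f : ℝ → ℝ) (x : ℝ) : Prop where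
  contDiffAt : ContDiffAt ℝ ∞ f x
  iteratedDeriv_nonneg : ∀ k : ℕ, 0 ≤ iteratedDeriv k f x

namespace HasNonnegIteratedDerivAt

variable {f g : ℝ → ℝ} {x : ℝ}

theorem const {r : ℝ} (hr : 0 ≤ r) : HasNonnegIteratedDerivAt (fun _ => r) x where
  contDiffAt := contDiffAt_const
  iteratedDeriv_nonneg k := by
    rw [iteratedDeriv_const]
    split_ifs
    exacts [hr, le_rfl]

theorem mul (hf : HasNonnegIteratedDerivAt f x) (hg : HasNonnegIteratedDerivAt g x) :
    HasNonnegIteratedDerivAt (f * g) x where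
  contDiffAt := hf.contDiffAt.mul hg.contDiffAt
  iteratedDeriv_nonneg k := by
    rw [iteratedDeriv_mul (contDiffAt_infty.1 hf.contDiffAt k) (contDiffAt_infty.1 hg.contDiffAt k)]
    exact sum_nonneg fun i _ =>
      mul_nonneg (mul_nonneg (Nat.cast_nonneg _) (hf.iteratedDeriv_nonneg i))
        (hg.iteratedDeriv_nonneg (k - i))

theorem pow (hf : HasNonnegIteratedDerivAt f x) (p : ℕ) : HasNonnegIteratedDerivAt (f ^ p) x := by
  induction p with
  | zero => rw [pow_zero]; exact const zero_le_one
  | succ p ih => simpa only [pow_succ] using ih.mul hf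

theorem prod {ι : Type*} {s : Finset ι} {f : ι → ℝ → ℝ}
    (hf : ∀ i ∈ s, HasNonnegIteratedDerivAt (f i) x) :
    HasNonnegIteratedDerivAt (∏ i ∈ s, f i) x :=
  prod_induction _ (HasNonnegIteratedDerivAt · x) (fun _ _ => mul) (const zero_le_one) hf

theorem inv_sub {c : ℝ} (hx : x < c) : HasNonnegIteratedDerivAt (fun u => (c - u)⁻¹) x where
  contDiffAt := (contDiffAt_const.sub contDiffAt_id).inv (sub_ne_zero.2 hx.ne')
  iteratedDeriv_nonneg k := by
    have h := congrFun (iter_deriv_inv_linear k (-1 : ℝ) c) x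
    simp only [← iteratedDeriv_eq_iterate, neg_one_mul, neg_add_eq_sub] at h
    rw [h, mul_assoc _ _ ((-1 : ℝ) ^ k), mul_comm _ ((-1 : ℝ) ^ k), ← mul_assoc, ← mul_pow]
    norm_num
    exact mul_nonneg (by positivity) (zpow_nonneg (by linarith) _)

theorem taylor_sum_pos (hf : HasNonnegIteratedDerivAt f x) (hfx : 0 < f x) {t : ℝ} (ht : x ≤ t)
    (m : ℕ) :
    0 < ∑ ℓ ∈ range (m + 1), (t - x) ^ ℓ * iteratedDeriv ℓ f x / (ℓ.factorial : ℝ) := by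
  refine sum_pos' (fun ℓ _ => ?_) ⟨0, mem_range.2 m.succ_pos, by simpa using hfx⟩
  have hℓ := hf.iteratedDeriv_nonneg ℓ
  have htx : 0 ≤ t - x := sub_nonneg.2 ht
  positivity

end HasNonnegIteratedDerivAt

theorem taylor_partial_sum_pos_general
    (n s : ℕ) (a b : ℝ) (hab : a < b)
    (τ : ℕ → ℝ)
    (hτab : ∀ j < n, τ j ∈ Set.Ioo a b)
    (m : ℕ) (t : ℝ) (ht : t ∈ Set.Icc a b) :
    0 < ∑ ℓ ∈ Finset.range (m + 1),
        (t - a) ^ ℓ *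
          iteratedDeriv ℓ (fun u => ((b - u) ^ s * ∏ k ∈ Finset.range n, (τ k - u) ^ 2)⁻¹) a
          / (ℓ.factorial : ℝ) := by
  have hτa : ∀ k ∈ range n, a < τ k := fun k hk => (hτab k (mem_range.1 hk)).1
  have hfactors : (fun u => ((b - u) ^ s * ∏ k ∈ range n, (τ k - u) ^ 2)⁻¹) =
      (fun u => (b - u)⁻¹) ^ s * ∏ k ∈ range n, (fun u => (τ k - u)⁻¹) ^ 2 := by
    funext u
    simp only [Pi.mul_apply, Pi.pow_apply, prod_apply, mul_inv, prod_inv_distrib, inv_pow]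
  have hderivs : HasNonnegIteratedDerivAt
      (fun u => ((b - u) ^ s * ∏ k ∈ range n, (τ k - u) ^ 2)⁻¹) a := by
    rw [hfactors]
    exact ((HasNonnegIteratedDerivAt.inv_sub hab).pow s).mul <|
      HasNonnegIteratedDerivAt.prod fun k hk => (HasNonnegIteratedDerivAt.inv_sub (hτa k hk)).pow 2
  have hω : 0 < (b - a) ^ s * ∏ k ∈ range n, (τ k - a) ^ 2 :=
    mul_pos (pow_pos (sub_pos.2 hab) s) (prod_pos fun k hk => pow_pos (sub_pos.2 (hτa k hk)) 2)
  exact hderivs.taylor_sum_pos (inv_pos.2 hω) ht.1 m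

/-- with `ω(t) = (b-t)^s ∏_{k=1}^n (τ_k - t)^2`, the `m`-th partial sum
`Ω_m(t) = Σ_{ℓ=0}^m (t-a)^ℓ (1/ω)^{(ℓ)}(a)/ℓ!` of the Taylor expansion of `1/ω`
at `a` is strictly positive on `[a,b]`. -/
theorem taylor_partial_sum_pos
    (n s : ℕ) (a b : ℝ) (hab : a < b)
    (τ : ℕ → ℝ)
    (hτab : ∀ j < n, τ j ∈ Set.Ioo a b)
    (hτmono : ∀ i j, i < j → j < n → τ i < τ j)
    (m : ℕ) (t : ℝ) (ht : t ∈ Set.Icc a b) :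
    0 < ∑ ℓ ∈ Finset.range (m + 1),
        (t - a) ^ ℓ *
          iteratedDeriv ℓ (fun u => ((b - u) ^ s * ∏ k ∈ Finset.range n, (τ k - u) ^ 2)⁻¹) a
          / (ℓ.factorial : ℝ) :=
  taylor_partial_sum_pos_general n s a b hab τ hτab m t ht
end

section
/- Let n, s ≥ 0 and r ≥ 1 be integers, a < b real numbers, a < τ_1 < … < τ_n < b, and 0 ≤ j ≤ r−1. Then the polynomial P_{n,r,s,a,j}(t) = ((t−a)^j/j!) Ω_{r−j−1}(t) ω(t) is nonnegative on the whole interval [a, b]. -/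
/-- `ω(t) = (b-t)^s ∏_{k=1}^n (τ_k - t)^2`. -/
noncomputable def omegaFun (b : ℝ) (n s : ℕ) (τ : ℕ → ℝ) (t : ℝ) : ℝ :=
  (b - t) ^ s * ∏ k ∈ Finset.range n, (τ k - t) ^ 2

/-- `Ω_m(t)`, the `m`-th partial sum of the Taylor expansion of `1/ω` at `t = a`. -/
noncomputable def OmegaFun (a b : ℝ) (n s : ℕ) (τ : ℕ → ℝ) (m : ℕ) (t : ℝ) : ℝ :=
  ∑ ℓ ∈ Finset.range (m + 1),
    (t - a) ^ ℓ * iteratedDeriv ℓ (fun u => (omegaFun b n s τ u)⁻¹) a / (ℓ.factorial : ℝ)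

/-- `P_{n,r,s,a,j}(t) = ((t-a)^j / j!) Ω_{r-j-1}(t) ω(t)`. -/
noncomputable def PaFun (a b : ℝ) (n r s : ℕ) (τ : ℕ → ℝ) (j : ℕ) (t : ℝ) : ℝ :=
  ((t - a) ^ j / (j.factorial : ℝ)) * OmegaFun a b n s τ (r - j - 1) t * omegaFun b n s τ t

/-!
The Taylor coefficients of `1/ω` at `a` are nonnegative: `1/ω` is a product of factors
`(c - u)^(-q)` with `c > a`, each of which has `k`-th derivative `q(q+1)⋯(q+k-1)(c - u)^(-q-k) ≥ 0`
for `u < c`, and the Leibniz rule preserves nonnegativity of all derivatives under products.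
Hence `Ω_m ≥ 0` for `t ≥ a`, while `ω ≥ 0` for `t ≤ b`.
-/

open Finset
open scoped ContDiff

theorem iteratedDeriv_fun_mul_nonneg {f g : ℝ → ℝ} {x : ℝ}
    (hf : ContDiffAt ℝ ∞ f x) (hg : ContDiffAt ℝ ∞ g x)
    (hf₀ : ∀ k, 0 ≤ iteratedDeriv k f x) (hg₀ : ∀ k, 0 ≤ iteratedDeriv k g x) (n : ℕ) :
    0 ≤ iteratedDeriv n (fun y => f y * g y) x := by
  rw [iteratedDeriv_fun_mul (hf.of_le (by exact_mod_cast le_top))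
    (hg.of_le (by exact_mod_cast le_top))]
  exact sum_nonneg fun i _ => mul_nonneg (mul_nonneg (Nat.cast_nonneg _) (hf₀ i)) (hg₀ _)

theorem iteratedDeriv_finset_prod_nonneg {ι : Type*} (I : Finset ι) {f : ι → ℝ → ℝ} {x : ℝ}
    (hf : ∀ i ∈ I, ContDiffAt ℝ ∞ (f i) x) (hf₀ : ∀ i ∈ I, ∀ k, 0 ≤ iteratedDeriv k (f i) x)
    (n : ℕ) : 0 ≤ iteratedDeriv n (fun y => ∏ i ∈ I, f i y) x := by
  classical
  induction I using Finset.induction_on generalizing n with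
  | empty =>
    simp only [prod_empty, iteratedDeriv_const]
    split_ifs <;> norm_num
  | insert i I hi ih =>
    rw [forall_mem_insert] at hf hf₀
    simp only [prod_insert hi]
    exact iteratedDeriv_fun_mul_nonneg hf.1 (contDiffAt_prod hf.2) hf₀.1 (ih hf.2 hf₀.2) n

theorem contDiffAt_inv_const_sub_pow {c x : ℝ} (hx : x ≠ c) (q : ℕ) :
    ContDiffAt ℝ ∞ (fun u => ((c - u) ^ q)⁻¹) x :=
  ((contDiffAt_const.sub contDiffAt_id).pow q).inv (pow_ne_zero q (sub_ne_zero.mpr hx.symm))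

theorem iteratedDeriv_inv_const_sub_pow {c x : ℝ} (q k : ℕ) :
    iteratedDeriv k (fun u => ((c - u) ^ q)⁻¹) x
      = (∏ i ∈ range k, ((q : ℝ) + i)) * (c - x) ^ (-(q + k : ℤ)) := by
  have h := congr_fun (iteratedDeriv_comp_const_sub k (fun y : ℝ => y ^ (-(q : ℤ))) c) x
  simp only [zpow_neg, zpow_natCast] at h
  rw [h, iteratedDeriv_eq_iterate, smul_eq_mul]
  have hzpow := iter_deriv_zpow (-(q : ℤ)) (c - x) k
  simp only [zpow_neg, zpow_natCast] at hzpow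
  rw [hzpow, ← mul_assoc, neg_add']
  congr 1
  rw [← card_range k, ← prod_const, card_range, ← prod_mul_distrib]
  refine prod_congr rfl fun i _ => ?_
  push_cast
  ring

theorem iteratedDeriv_inv_const_sub_pow_nonneg {c x : ℝ} (hx : x < c) (q k : ℕ) :
    0 ≤ iteratedDeriv k (fun u => ((c - u) ^ q)⁻¹) x := by
  rw [iteratedDeriv_inv_const_sub_pow]
  exact mul_nonneg (prod_nonneg fun i _ => by positivity) (zpow_nonneg (by linarith) _)

theorem omegaFun_inv_eq (b : ℝ) (n s : ℕ) (τ : ℕ → ℝ) :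
    (fun u => (omegaFun b n s τ u)⁻¹)
      = fun u => ((b - u) ^ s)⁻¹ * ∏ k ∈ range n, ((τ k - u) ^ 2)⁻¹ := by
  funext u
  rw [omegaFun, mul_inv, prod_inv_distrib]

theorem iteratedDeriv_omegaFun_inv_nonneg {a b : ℝ} (hab : a < b) (n s : ℕ) {τ : ℕ → ℝ}
    (hτ : ∀ k < n, a < τ k) (ℓ : ℕ) :
    0 ≤ iteratedDeriv ℓ (fun u => (omegaFun b n s τ u)⁻¹) a := by
  have hτ' : ∀ k ∈ range n, a < τ k := fun k hk => hτ k (mem_range.mp hk)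
  rw [omegaFun_inv_eq]
  exact iteratedDeriv_fun_mul_nonneg (contDiffAt_inv_const_sub_pow hab.ne s)
    (contDiffAt_prod fun k hk => contDiffAt_inv_const_sub_pow (hτ' k hk).ne 2)
    (iteratedDeriv_inv_const_sub_pow_nonneg hab s)
    (iteratedDeriv_finset_prod_nonneg _ (fun k hk => contDiffAt_inv_const_sub_pow (hτ' k hk).ne 2)
      fun k hk => iteratedDeriv_inv_const_sub_pow_nonneg (hτ' k hk) 2) ℓ

theorem OmegaFun_nonneg {a b : ℝ} (hab : a < b) (n s : ℕ) {τ : ℕ → ℝ}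
    (hτ : ∀ k < n, a < τ k) (m : ℕ) {t : ℝ} (ht : a ≤ t) : 0 ≤ OmegaFun a b n s τ m t :=
  sum_nonneg fun ℓ _ => div_nonneg (mul_nonneg (pow_nonneg (sub_nonneg.mpr ht) ℓ)
    (iteratedDeriv_omegaFun_inv_nonneg hab n s hτ ℓ)) (Nat.cast_nonneg _)

theorem omegaFun_nonneg {b t : ℝ} (ht : t ≤ b) (n s : ℕ) (τ : ℕ → ℝ) :
    0 ≤ omegaFun b n s τ t :=
  mul_nonneg (pow_nonneg (sub_nonneg.mpr ht) s) (prod_nonneg fun _ _ => sq_nonneg _)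

theorem P_nonneg_general
    (n s r : ℕ) (a b : ℝ) (hab : a < b)
    (τ : ℕ → ℝ)
    (hτab : ∀ k < n, τ k ∈ Set.Ioo a b)
    (j : ℕ)
    (t : ℝ) (ht : t ∈ Set.Icc a b) :
    0 ≤ PaFun a b n r s τ j t := by
  have hΩ := OmegaFun_nonneg hab n s (fun k hk => (hτab k hk).1) (r - j - 1) ht.1
  have hpow : 0 ≤ (t - a) ^ j / (j.factorial : ℝ) :=
    div_nonneg (pow_nonneg (sub_nonneg.mpr ht.1) j) (Nat.cast_nonneg _)
  exact mul_nonneg (mul_nonneg hpow hΩ) (omegaFun_nonneg ht.2 n s τ)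

/-- the polynomial `P_{n,r,s,a,j}` is nonnegative on `[a,b]`. -/
theorem P_nonneg
    (n s r : ℕ) (hr : 1 ≤ r) (a b : ℝ) (hab : a < b)
    (τ : ℕ → ℝ)
    (hτab : ∀ k < n, τ k ∈ Set.Ioo a b)
    (hτmono : ∀ i k, i < k → k < n → τ i < τ k)
    (j : ℕ) (hj : j ≤ r - 1)
    (t : ℝ) (ht : t ∈ Set.Icc a b) :
    0 ≤ PaFun a b n r s τ j t :=
  P_nonneg_general n s r a b hab τ hτab j t ht
end

section
/- Let n, s ≥ 0 and r ≥ 1 be integers, a < b real numbers, a < τ_1 < … < τ_n < b, and 0 ≤ j ≤ r−1. The polynomial P_j = P_{n,r,s,a,j} has degree at most 2n+r+s−1 and satisfies the Hermite interpolation conditions: P_j(τ_k) = 0 and P_j'(τ_k) = 0 for k = 1, …, n; P_j^{(k)}(b) = 0 for k = 0, …, s−1; and P_j^{(k)}(a)/k! = δ_{kj}/j! for k = 0, …, r−1 (i.e. P_j^{(j)}(a) = 1 and all other derivatives of order < r vanish at a). -/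
open Polynomial Filter Set

/-! ### Auxiliary lemmas -/

lemma iterDerivWithin_eq {s : Set ℝ} (hs : IsOpen s) {x : ℝ} (hx : x ∈ s) (f : ℝ → ℝ) (n : ℕ) :
    iteratedDerivWithin n f s x = iteratedDeriv n f x := by
  simp only [iteratedDerivWithin, iteratedDeriv, iteratedFDerivWithin_of_isOpen n hs hx]

lemma iter_deriv_congr {f g : ℝ → ℝ} {a : ℝ} (h : f =ᶠ[nhds a] g) (k : ℕ) :
    deriv^[k] f a = deriv^[k] g a := by
  induction k generalizing f g with
  | zero => exact h.self_of_nhds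
  | succ k ih =>
    rw [Function.iterate_succ_apply, Function.iterate_succ_apply]
    exact ih h.deriv

lemma iter_deriv_polyeval (p : ℝ[X]) (k : ℕ) :
    deriv^[k] (fun t => p.eval t) = fun t => (derivative^[k] p).eval t := by
  induction k generalizing p with
  | zero => rfl
  | succ k ih =>
    rw [Function.iterate_succ_apply, Function.iterate_succ_apply,
      show deriv (fun t => p.eval t) = fun t => p.derivative.eval t from
        funext fun t => p.deriv]
    exact ih p.derivative

lemma contDiff_polyeval (p : ℝ[X]) : ContDiff ℝ (⊤ : ℕ∞) fun t => p.eval t := by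
  induction p using Polynomial.induction_on' with
  | add p q hp hq => simpa using hp.add hq
  | monomial i c => simpa [eval_monomial] using contDiff_const.mul (contDiff_id.pow i)

lemma iter_deriv_add {U : Set ℝ} (hU : IsOpen U) {a : ℝ} (ha : a ∈ U) {u v : ℝ → ℝ}
    (hu : ContDiffOn ℝ (⊤ : ℕ∞) u U) (hv : ContDiffOn ℝ (⊤ : ℕ∞) v U) (k : ℕ) :
    deriv^[k] (fun t => u t + v t) a = deriv^[k] u a + deriv^[k] v a := by
  rw [← iteratedDeriv_eq_iterate, ← iteratedDeriv_eq_iterate, ← iteratedDeriv_eq_iterate,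
    ← iterDerivWithin_eq hU ha, ← iterDerivWithin_eq hU ha, ← iterDerivWithin_eq hU ha]
  exact iteratedDerivWithin_add ha hU.uniqueDiffOn ((hu.contDiffWithinAt ha).of_le (mod_cast le_top))
    ((hv.contDiffWithinAt ha).of_le (mod_cast le_top))

lemma iter_deriv_sub {U : Set ℝ} (hU : IsOpen U) {a : ℝ} (ha : a ∈ U) {u v : ℝ → ℝ}
    (hu : ContDiffOn ℝ (⊤ : ℕ∞) u U) (hv : ContDiffOn ℝ (⊤ : ℕ∞) v U) (k : ℕ) :
    deriv^[k] (fun t => u t - v t) a = deriv^[k] u a - deriv^[k] v a := by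
  rw [← iteratedDeriv_eq_iterate, ← iteratedDeriv_eq_iterate, ← iteratedDeriv_eq_iterate,
    ← iterDerivWithin_eq hU ha, ← iterDerivWithin_eq hU ha, ← iterDerivWithin_eq hU ha]
  exact iteratedDerivWithin_sub ha hU.uniqueDiffOn ((hu.contDiffWithinAt ha).of_le (mod_cast le_top))
    ((hv.contDiffWithinAt ha).of_le (mod_cast le_top))

/-- If all iterated derivatives of `f` up to order `m` vanish at `a`, then so do those of
`f * g`, provided `f` and `g` are smooth on an open set around `a`. -/
lemma key_vanish {U : Set ℝ} (hU : IsOpen U) {a : ℝ} (ha : a ∈ U) :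
    ∀ m : ℕ, ∀ f g : ℝ → ℝ, ContDiffOn ℝ (⊤ : ℕ∞) f U → ContDiffOn ℝ (⊤ : ℕ∞) g U →
      (∀ k ≤ m, deriv^[k] f a = 0) → ∀ k ≤ m, deriv^[k] (fun t => f t * g t) a = 0 := by
  intro m
  induction m with
  | zero =>
    intro f g hf hg h0 k hk
    obtain rfl : k = 0 := Nat.le_zero.mp hk
    simpa using mul_eq_zero_of_left (by simpa using h0 0 le_rfl) (g a)
  | succ m ih =>
    intro f g hf hg h0 k hk
    match k with
    | 0 => simpa using mul_eq_zero_of_left (by simpa using h0 0 (by omega)) (g a)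
    | (k+1) =>
      rw [Function.iterate_succ_apply]
      have hf' : ContDiffOn ℝ (⊤ : ℕ∞) (deriv f) U := hf.deriv_of_isOpen hU (mod_cast le_top)
      have hg' : ContDiffOn ℝ (⊤ : ℕ∞) (deriv g) U := hg.deriv_of_isOpen hU (mod_cast le_top)
      have hev : deriv (fun t => f t * g t) =ᶠ[nhds a]
          fun t => deriv f t * g t + f t * deriv g t := by
        filter_upwards [hU.mem_nhds ha] with x hx
        exact deriv_fun_mul ((hf.contDiffAt (hU.mem_nhds hx)).differentiableAt (by simp))
          ((hg.contDiffAt (hU.mem_nhds hx)).differentiableAt (by simp))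
      rw [iter_deriv_congr hev k,
        iter_deriv_add hU ha (hf'.mul hg) (hf.mul hg') k,
        ih (deriv f) g hf' hg (fun i hi => by
          rw [← Function.iterate_succ_apply]; exact h0 (i+1) (by omega)) k (by omega),
        ih f (deriv g) hf hg' (fun i hi => h0 i (by omega)) k (by omega), add_zero]

lemma eval_iter_derivative (p : ℝ[X]) (a : ℝ) (k : ℕ) :
    (derivative^[k] p).eval a = (k.factorial : ℝ) * (taylor a p).coeff k := by
  rw [taylor_coeff, ← factorial_smul_hasseDeriv]
  simp [nsmul_eq_mul]

lemma taylor_coeff_eq_zero {p : ℝ[X]} {a : ℝ} {k : ℕ}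
    (h : deriv^[k] (fun t => p.eval t) a = 0) : (taylor a p).coeff k = 0 := by
  rw [iter_deriv_polyeval] at h
  simp only at h
  rw [eval_iter_derivative] at h
  have : (k.factorial : ℝ) ≠ 0 := Nat.cast_ne_zero.mpr k.factorial_ne_zero
  exact (mul_eq_zero.mp h).resolve_left this

lemma dvd_of_taylor_coeff_eq_zero (p : ℝ[X]) (a : ℝ) (m : ℕ)
    (h : ∀ k ≤ m, (taylor a p).coeff k = 0) : (X - C a) ^ (m + 1) ∣ p := by
  conv_rhs => rw [← sum_taylor_eq p a]
  rw [Polynomial.sum_def]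
  apply Finset.dvd_sum
  intro i hi
  have hmi : m + 1 ≤ i := by
    by_contra hlt
    exact mem_support_iff.mp hi (h i (by omega))
  exact (pow_dvd_pow _ hmi).mul_left _

lemma step_dvd {c : ℝ} {p : ℝ[X]} {i : ℕ} (h : (X - C c) ^ (i + 1) ∣ p) :
    (X - C c) ^ i ∣ derivative p := by
  obtain ⟨q, rfl⟩ := h
  rw [derivative_mul, derivative_pow, derivative_X_sub_C, mul_one]
  exact dvd_add (((dvd_refl _).mul_left _).mul_right q)
    (((pow_dvd_pow _ (Nat.le_succ i)).mul_right _))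

lemma iter_step_dvd {c : ℝ} : ∀ (k m : ℕ), k ≤ m → ∀ p : ℝ[X],
    (X - C c) ^ m ∣ p → (X - C c) ^ (m - k) ∣ derivative^[k] p := by
  intro k
  induction k with
  | zero => intro m _ p hp; simpa using hp
  | succ k ih =>
    intro m hk p hp
    obtain ⟨i, rfl⟩ : ∃ i, m = i + 1 := ⟨m - 1, by omega⟩
    rw [Function.iterate_succ_apply]
    have := ih i (by omega) (derivative p) (step_dvd hp)
    simpa [show i + 1 - (k + 1) = i - k by omega] using this

lemma iterate_derivative_add' (p q : ℝ[X]) (k : ℕ) :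
    derivative^[k] (p + q) = derivative^[k] p + derivative^[k] q := by
  induction k generalizing p q with
  | zero => rfl
  | succ k ih =>
    rw [Function.iterate_succ_apply, Function.iterate_succ_apply, Function.iterate_succ_apply,
      derivative_add]
    exact ih _ _

/-! ### The polynomials -/

noncomputable def Wpoly (b : ℝ) (n s : ℕ) (τ : ℕ → ℝ) : ℝ[X] :=
  (C b - X) ^ s * ∏ k ∈ Finset.range n, (C (τ k) - X) ^ 2

lemma eval_Wpoly (b : ℝ) (n s : ℕ) (τ : ℕ → ℝ) (t : ℝ) :
    (Wpoly b n s τ).eval t = omegaFun b n s τ t := by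
  simp [Wpoly, omegaFun, eval_prod]

noncomputable def Qpoly (a b : ℝ) (n s : ℕ) (τ : ℕ → ℝ) (m : ℕ) : ℝ[X] :=
  ∑ ℓ ∈ Finset.range (m + 1),
    C (iteratedDeriv ℓ (fun u => (omegaFun b n s τ u)⁻¹) a / (ℓ.factorial : ℝ)) * (X - C a) ^ ℓ

lemma eval_Qpoly (a b : ℝ) (n s : ℕ) (τ : ℕ → ℝ) (m : ℕ) (t : ℝ) :
    (Qpoly a b n s τ m).eval t = OmegaFun a b n s τ m t := by
  simp only [Qpoly, OmegaFun, eval_finset_sum, eval_mul, eval_C, eval_pow, eval_sub, eval_X]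
  exact Finset.sum_congr rfl fun ℓ _ => by ring

lemma taylor_Qpoly (a b : ℝ) (n s : ℕ) (τ : ℕ → ℝ) (m : ℕ) :
    taylor a (Qpoly a b n s τ m) =
      ∑ ℓ ∈ Finset.range (m + 1),
        C (iteratedDeriv ℓ (fun u => (omegaFun b n s τ u)⁻¹) a / (ℓ.factorial : ℝ)) * X ^ ℓ := by
  rw [Qpoly, map_sum]
  refine Finset.sum_congr rfl fun ℓ _ => ?_
  rw [taylor_apply, mul_comp, C_comp, pow_comp, sub_comp, X_comp, C_comp]
  simp

lemma taylor_Qpoly_coeff (a b : ℝ) (n s : ℕ) (τ : ℕ → ℝ) (m k : ℕ) (hk : k ≤ m) :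
    (taylor a (Qpoly a b n s τ m)).coeff k =
      iteratedDeriv k (fun u => (omegaFun b n s τ u)⁻¹) a / (k.factorial : ℝ) := by
  rw [taylor_Qpoly, finset_sum_coeff]
  simp only [coeff_C_mul, coeff_X_pow]
  rw [Finset.sum_eq_single k]
  · simp
  · intro ℓ _ hne; simp [Ne.symm hne]
  · intro h; exact absurd (Finset.mem_range.mpr (by omega)) h

lemma iter_deriv_evalQ (a b : ℝ) (n s : ℕ) (τ : ℕ → ℝ) (m k : ℕ) (hk : k ≤ m) :
    deriv^[k] (fun t => (Qpoly a b n s τ m).eval t) a =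
      iteratedDeriv k (fun u => (omegaFun b n s τ u)⁻¹) a := by
  rw [iter_deriv_polyeval]
  simp only
  rw [eval_iter_derivative, taylor_Qpoly_coeff a b n s τ m k hk,
    mul_div_cancel₀ _ (Nat.cast_ne_zero.mpr k.factorial_ne_zero)]

lemma key_dvd (a b : ℝ) (n s : ℕ) (τ : ℕ → ℝ) (hωa : omegaFun b n s τ a ≠ 0) (m : ℕ) :
    (X - C a) ^ (m + 1) ∣ Qpoly a b n s τ m * Wpoly b n s τ - 1 := by
  set U : Set ℝ := {t : ℝ | omegaFun b n s τ t ≠ 0} with hUdef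
  have hωc : ContDiff ℝ (⊤ : ℕ∞) (omegaFun b n s τ) := by
    have : omegaFun b n s τ = fun t => (Wpoly b n s τ).eval t :=
      funext fun t => (eval_Wpoly b n s τ t).symm
    rw [this]; exact contDiff_polyeval _
  have hU : IsOpen U := isOpen_ne.preimage hωc.continuous
  have ha : a ∈ U := hωa
  set g : ℝ → ℝ := fun u => (omegaFun b n s τ u)⁻¹ with hgdef
  have hg : ContDiffOn ℝ (⊤ : ℕ∞) g U := hωc.contDiffOn.inv fun x hx => hx
  have hQc : ContDiff ℝ (⊤ : ℕ∞) fun t => (Qpoly a b n s τ m).eval t := contDiff_polyeval _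
  have hfc : ContDiffOn ℝ (⊤ : ℕ∞) (fun t => (Qpoly a b n s τ m).eval t - g t) U :=
    hQc.contDiffOn.sub hg
  have hvanish : ∀ k ≤ m, deriv^[k] (fun t => (Qpoly a b n s τ m).eval t - g t) a = 0 := by
    intro k hk
    rw [iter_deriv_sub hU ha hQc.contDiffOn hg k, iter_deriv_evalQ a b n s τ m k hk,
      ← iteratedDeriv_eq_iterate, sub_self]
  apply dvd_of_taylor_coeff_eq_zero
  intro k hk
  apply taylor_coeff_eq_zero
  have hev : (fun t => (Qpoly a b n s τ m * Wpoly b n s τ - 1).eval t) =ᶠ[nhds a]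
      fun t => ((Qpoly a b n s τ m).eval t - g t) * omegaFun b n s τ t := by
    filter_upwards [hU.mem_nhds ha] with x hx
    have h1 : g x * omegaFun b n s τ x = 1 := inv_mul_cancel₀ hx
    simp only [eval_sub, eval_mul, eval_one, eval_Wpoly, sub_mul, h1]
  rw [iter_deriv_congr hev k]
  exact key_vanish hU ha m _ _ hfc hωc.contDiffOn hvanish k hk

/-- `P_j = P_{n,r,s,a,j}` is a polynomial of degree at most `2n+r+s-1`
satisfying the Hermite interpolation conditions: it vanishes doubly at each `τ_k`,
to order `s` at `b`, and `P_j^{(k)}(a)/k! = δ_{kj}/j!` for `k = 0,…,r-1`. -/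
theorem P_hermite_conditions
    (n s r : ℕ) (hr : 1 ≤ r) (a b : ℝ) (hab : a < b)
    (τ : ℕ → ℝ)
    (hτab : ∀ k < n, τ k ∈ Set.Ioo a b)
    (hτmono : ∀ i k, i < k → k < n → τ i < τ k)
    (j : ℕ) (hj : j ≤ r - 1) :
    (∃ p : Polynomial ℝ, (∀ t, p.eval t = PaFun a b n r s τ j t) ∧
        p.natDegree + 1 ≤ 2 * n + r + s) ∧
    (∀ k < n, PaFun a b n r s τ j (τ k) = 0) ∧
    (∀ k < n, deriv (PaFun a b n r s τ j) (τ k) = 0) ∧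
    (∀ k < s, iteratedDeriv k (PaFun a b n r s τ j) b = 0) ∧
    (∀ k < r, iteratedDeriv k (PaFun a b n r s τ j) a / (k.factorial : ℝ)
        = (if k = j then 1 else 0) / (j.factorial : ℝ)) := by
  have hjr : j + (r - j - 1) + 1 = r := by omega
  set m : ℕ := r - j - 1 with hm
  set W : ℝ[X] := Wpoly b n s τ with hW
  set Q : ℝ[X] := Qpoly a b n s τ m with hQ
  set P : ℝ[X] := C ((j.factorial : ℝ))⁻¹ * ((X - C a) ^ j * (Q * W)) with hP
  have hPeval : ∀ t, P.eval t = PaFun a b n r s τ j t := by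
    intro t
    simp only [hP, PaFun, eval_mul, eval_C, eval_pow, eval_sub, eval_X, hQ, hW,
      eval_Qpoly, eval_Wpoly, ← hm]
    ring
  have hPfun : PaFun a b n r s τ j = fun t => P.eval t :=
    funext fun t => (hPeval t).symm
  have hωa : omegaFun b n s τ a ≠ 0 := by
    refine mul_ne_zero (pow_ne_zero _ (sub_ne_zero.mpr hab.ne')) ?_
    rw [Finset.prod_ne_zero_iff]
    intro k hk
    exact pow_ne_zero _ (sub_ne_zero.mpr (hτab k (Finset.mem_range.mp hk)).1.ne')
  -- divisibility facts
  have hWP : W ∣ P := (dvd_mul_left W Q).trans ((dvd_mul_left _ _).trans (dvd_mul_left _ _))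
  have hdvd_b : (X - C b) ^ s ∣ P := by
    refine dvd_trans ?_ hWP
    have hneg : (C b - X : ℝ[X]) ^ s = (X - C b) ^ s * (-1 : ℝ[X]) ^ s := by
      rw [show (C b - X : ℝ[X]) = -1 * (X - C b) by ring, mul_pow, mul_comm]
    exact dvd_trans ⟨(-1 : ℝ[X]) ^ s, hneg⟩ (dvd_mul_right _ _)
  have hdvd_τ : ∀ k < n, (X - C (τ k)) ^ 2 ∣ P := by
    intro k hk
    refine dvd_trans ?_ hWP
    rw [hW, Wpoly]
    refine dvd_trans ?_ (dvd_mul_left _ _)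
    exact dvd_trans ⟨(-1 : ℝ[X]) ^ 2, by ring⟩
      (Finset.dvd_prod_of_mem _ (Finset.mem_range.mpr hk))
  refine ⟨⟨P, hPeval, ?_⟩, ?_, ?_, ?_, ?_⟩
  · -- degree bound
    have hQd : Q.natDegree ≤ m := by
      refine (natDegree_sum_le _ _).trans ?_
      rw [Finset.fold_max_le]
      refine ⟨Nat.zero_le _, fun ℓ hℓ => ?_⟩
      refine (natDegree_mul_le).trans ?_
      simp only [natDegree_C, zero_add, Function.comp]
      calc ((X - C a) ^ ℓ).natDegree ≤ ℓ * (X - C a).natDegree := natDegree_pow_le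
        _ ≤ m := by rw [natDegree_X_sub_C]; have := Finset.mem_range.mp hℓ; omega
    have hWd : W.natDegree ≤ s + 2 * n := by
      refine (natDegree_mul_le).trans ?_
      have h1 : ((C b - X : ℝ[X]) ^ s).natDegree ≤ s := by
        calc ((C b - X : ℝ[X]) ^ s).natDegree ≤ s * (C b - X : ℝ[X]).natDegree :=
          natDegree_pow_le
        _ ≤ s := by
          rw [show (C b - X : ℝ[X]) = -(X - C b) by ring, natDegree_neg, natDegree_X_sub_C]
          omega
      have h2 : (∏ k ∈ Finset.range n, ((C (τ k) - X : ℝ[X])) ^ 2).natDegree ≤ 2 * n := by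
        refine (natDegree_prod_le _ _).trans ?_
        calc ∑ k ∈ Finset.range n, (((C (τ k) - X : ℝ[X])) ^ 2).natDegree
            ≤ ∑ k ∈ Finset.range n, 2 := by
              refine Finset.sum_le_sum fun k _ => ?_
              calc (((C (τ k) - X : ℝ[X])) ^ 2).natDegree
                  ≤ 2 * ((C (τ k) - X : ℝ[X])).natDegree := natDegree_pow_le
                _ ≤ 2 := by
                  rw [show (C (τ k) - X : ℝ[X]) = -(X - C (τ k)) by ring, natDegree_neg,
                    natDegree_X_sub_C]
          _ = 2 * n := by simp [mul_comm]
      omega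
    have hPd : P.natDegree ≤ 0 + (j + (m + (s + 2 * n))) := by
      refine (natDegree_mul_le).trans ?_
      gcongr
      · exact le_of_eq (natDegree_C _)
      refine (natDegree_mul_le).trans ?_
      gcongr
      · calc ((X - C a : ℝ[X]) ^ j).natDegree ≤ j * (X - C a : ℝ[X]).natDegree :=
            natDegree_pow_le
          _ ≤ j := by rw [natDegree_X_sub_C]; omega
      refine (natDegree_mul_le).trans ?_
      gcongr
    omega
  · -- vanishing at τ k
    intro k hk
    have : omegaFun b n s τ (τ k) = 0 := by
      apply mul_eq_zero_of_right
      exact Finset.prod_eq_zero (Finset.mem_range.mpr hk) (by simp)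
    rw [PaFun, this, mul_zero]
  · -- derivative vanishing at τ k
    intro k hk
    rw [hPfun, Polynomial.deriv]
    have h1 : (X - C (τ k)) ∣ derivative P := by
      have := step_dvd (i := 1) (by simpa using hdvd_τ k hk)
      simpa using this
    obtain ⟨q, hq⟩ := h1
    simp [hq]
  · -- iterated derivatives at b
    intro k hk
    rw [hPfun, iteratedDeriv_eq_iterate, iter_deriv_polyeval]
    simp only
    have h1 : (X - C b) ^ (s - k) ∣ derivative^[k] P :=
      iter_step_dvd k s (by omega) P hdvd_b
    have h2 : (X - C b) ∣ derivative^[k] P :=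
      (dvd_pow_self _ (by omega : s - k ≠ 0)).trans h1
    obtain ⟨q, hq⟩ := h2
    simp [hq]
  · -- iterated derivatives at a
    intro k hk
    have hE : (X - C a) ^ r ∣ P - C ((j.factorial : ℝ))⁻¹ * (X - C a) ^ j := by
      have h1 : P - C ((j.factorial : ℝ))⁻¹ * (X - C a) ^ j =
          C ((j.factorial : ℝ))⁻¹ * ((X - C a) ^ j * (Q * W - 1)) := by
        rw [hP]; ring
      rw [h1, ← hjr]
      have h2 := key_dvd a b n s τ hωa m
      calc (X - C a) ^ (j + m + 1) = (X - C a) ^ j * (X - C a) ^ (m + 1) := by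
            rw [← pow_add]; ring_nf
        _ ∣ (X - C a) ^ j * (Q * W - 1) := mul_dvd_mul_left _ h2
        _ ∣ C ((j.factorial : ℝ))⁻¹ * ((X - C a) ^ j * (Q * W - 1)) := dvd_mul_left _ _
    rw [hPfun, iteratedDeriv_eq_iterate, iter_deriv_polyeval]
    simp only
    have hsplit : P = C ((j.factorial : ℝ))⁻¹ * (X - C a) ^ j +
        (P - C ((j.factorial : ℝ))⁻¹ * (X - C a) ^ j) := by ring
    rw [hsplit, iterate_derivative_add', eval_add]
    have hE0 : (derivative^[k] (P - C ((j.factorial : ℝ))⁻¹ * (X - C a) ^ j)).eval a = 0 := by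
      have h1 : (X - C a) ^ (r - k) ∣
          derivative^[k] (P - C ((j.factorial : ℝ))⁻¹ * (X - C a) ^ j) :=
        iter_step_dvd k r (by omega) _ hE
      have h2 : (X - C a) ∣ derivative^[k] (P - C ((j.factorial : ℝ))⁻¹ * (X - C a) ^ j) :=
        (dvd_pow_self _ (by omega : r - k ≠ 0)).trans h1
      obtain ⟨q, hq⟩ := h2
      simp [hq]
    rw [hE0, add_zero]
    rw [Polynomial.iterate_derivative_C_mul, eval_mul, eval_C,
      iterate_derivative_X_sub_pow]
    simp only [eval_smul, eval_pow, eval_sub, eval_X, eval_C, sub_self, smul_eq_mul]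
    rcases eq_or_ne k j with rfl | hne
    · simp [Nat.descFactorial_self, Nat.sub_self,
        inv_mul_cancel₀ (Nat.cast_ne_zero.mpr k.factorial_ne_zero : (k.factorial : ℝ) ≠ 0)]
    · rw [if_neg hne]
      rcases lt_or_gt_of_ne hne with hlt | hgt
      · rw [zero_pow (by omega : j - k ≠ 0)]
        simp
      · rw [Nat.descFactorial_eq_zero_iff_lt.mpr hgt]
        simp
end
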